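/- arXiv:1002.3215 — 2 statements merged into one kernel-verified Lean document; each statement's English description precedes it below -/
import Mathlib

section
/- For N > 0 define A(N) = (12/N)(e^{N/2} ∫₀^1 e^{−Nt²/2} dt − 1) − (12/N)(e^{N/2} − 1) · (∫₀^1 ∫₀^s e^{N(s²−t²)/2} dt ds)/(∫₀^1 e^{Ns²/2} ds). Then lim_{N→0⁺} A(N) = 1. -/
open MeasureTheory Filter Topology Real

/-!
Since `e^{N/2} ∫₀¹ e^{-Nt²/2} dt = F(N) := ∫₀¹ e^{N(1-t²)/2} dt` and `F(0) = 1`,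
`A(N) = 12 (F(N) - F(0))/N - 12 (e^{N/2} - 1)/N · D(N)/S(N)` with `D` the double integral and
`S` the denominator. Differentiating under the integral sign, the two difference quotients tend
to `F'(0) = ∫₀¹ (1 - t²)/2 dt = 1/3` and `1/2`, while `D(0) = 1/2` and `S(0) = 1` by continuity.
Hence `A(N) → 12 · 1/3 - 12 · 1/2 · 1/2 = 1`.
-/

theorem hasDerivAt_intervalIntegral_of_continuous {E : Type*} [NormedAddCommGroup E]
    [NormedSpace ℝ E] {F F' : ℝ → ℝ → E} {a b x₀ : ℝ}
    (hF : Continuous fun p : ℝ × ℝ ↦ F p.1 p.2) (hF' : Continuous fun p : ℝ × ℝ ↦ F' p.1 p.2)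
    (hderiv : ∀ x t, HasDerivAt (fun x ↦ F x t) (F' x t) x) :
    HasDerivAt (fun x ↦ ∫ t in a..b, F x t) (∫ t in a..b, F' x₀ t) x₀ := by
  obtain ⟨C, hC⟩ := ((isCompact_closedBall x₀ 1).prod
    (isCompact_uIcc (a := a) (b := b))).exists_bound_of_continuousOn hF'.continuousOn
  refine (intervalIntegral.hasDerivAt_integral_of_dominated_loc_of_deriv_le (bound := fun _ ↦ C)
    (Metric.closedBall_mem_nhds x₀ one_pos) ?_ ?_ ?_ ?_ intervalIntegrable_const
    (.of_forall fun t _ x _ ↦ hderiv x t)).2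
  · exact .of_forall fun x ↦ (hF.uncurry_left x).aestronglyMeasurable
  · exact (hF.uncurry_left x₀).intervalIntegrable _ _
  · exact (hF'.uncurry_left x₀).aestronglyMeasurable
  · exact .of_forall fun t ht x hx ↦ hC (x, t) ⟨hx, Set.uIoc_subset_uIcc ht⟩

theorem hasDerivAt_intervalIntegral_exp_mul {g : ℝ → ℝ} (hg : Continuous g) (a b x : ℝ) :
    HasDerivAt (fun N ↦ ∫ t in a..b, exp (N * g t)) (∫ t in a..b, g t * exp (x * g t)) x :=
  hasDerivAt_intervalIntegral_of_continuous (F := fun N t ↦ exp (N * g t))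
    (F' := fun N t ↦ g t * exp (N * g t)) (by fun_prop) (by fun_prop) fun N t ↦ by
    simpa [mul_comm] using ((hasDerivAt_id N).mul_const (g t)).exp

theorem continuous_intervalIntegral_intervalIntegral {E : Type*} [NormedAddCommGroup E]
    [NormedSpace ℝ E] {F : ℝ → ℝ → ℝ → E}
    (hF : Continuous fun p : ℝ × ℝ × ℝ ↦ F p.1 p.2.1 p.2.2) (a b c : ℝ) :
    Continuous fun x ↦ ∫ s in a..b, ∫ t in c..s, F x s t := by
  apply intervalIntegral.continuous_parametric_intervalIntegral_of_continuous'
  exact intervalIntegral.continuous_parametric_intervalIntegral_of_continuous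
    (f := fun (p : ℝ × ℝ) t ↦ F p.1 p.2 t) (by fun_prop) continuous_snd

/-- The modified Poiseuille coefficient `A(N)` tends to the classical value `1` as `N → 0⁺`. -/
theorem stmt6 :
    Tendsto
      (fun N : ℝ =>
        (12 / N) * (Real.exp (N / 2) * (∫ t in (0:ℝ)..1, Real.exp (-N * t^2 / 2)) - 1)
          - (12 / N) * (Real.exp (N / 2) - 1)
            * (∫ s in (0:ℝ)..1, ∫ t in (0:ℝ)..s, Real.exp (N * (s^2 - t^2) / 2))
            / (∫ s in (0:ℝ)..1, Real.exp (N * s^2 / 2)))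
      (𝓝[>] (0:ℝ)) (𝓝 1) := by
  have hF : HasDerivAt (fun N ↦ ∫ t in (0:ℝ)..1, exp (N * ((1 - t ^ 2) / 2))) (1 / 3) 0 := by
    convert hasDerivAt_intervalIntegral_exp_mul (g := fun t ↦ (1 - t ^ 2) / 2) (by fun_prop)
      0 1 0 using 1
    norm_num [integral_pow]
  have hE : HasDerivAt (fun N ↦ exp (N / 2)) (1 / 2) 0 := by
    simpa using ((hasDerivAt_id (0:ℝ)).div_const 2).exp
  have hD := (continuous_intervalIntegral_intervalIntegral
    (F := fun N s t ↦ exp (N * (s ^ 2 - t ^ 2) / 2)) (by fun_prop) 0 1 0).tendsto 0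
  have hS := (hasDerivAt_intervalIntegral_exp_mul (g := fun s ↦ s ^ 2 / 2) (by fun_prop)
    0 1 0).continuousAt.tendsto
  have hshift (N : ℝ) : exp (N / 2) * ∫ t in (0:ℝ)..1, exp (-N * t ^ 2 / 2) =
      ∫ t in (0:ℝ)..1, exp (N * ((1 - t ^ 2) / 2)) := by
    rw [← intervalIntegral.integral_const_mul]
    congr 1 with t
    rw [← exp_add]
    ring_nf
  convert (hF.tendsto_slope_zero_right.const_mul 12).sub
    (((hE.tendsto_slope_zero_right.const_mul 12).mul (hD.mono_left nhdsWithin_le_nhds)).div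
      (hS.mono_left nhdsWithin_le_nhds) (by simp)) using 1
  · ext N
    rw [hshift]
    simp only [zero_add, zero_mul, zero_div, exp_zero, intervalIntegral.integral_const,
      smul_eq_mul, mul_div_assoc, Pi.div_apply]
    ring
  · norm_num
end

section
/- For every N > 0, the coefficient B(N) = (1/N)(e^{N/2} − 1)/(∫₀^1 e^{Ns²/2} ds) satisfies B(N) > 1/2. -/
open MeasureTheory Real

/-!
Since `(2 / N) (e^{N/2} - 1) = ∫₀¹ e^{Ns/2} ds`, the claim `B(N) > 1/2` says
`∫₀¹ e^{Ns²/2} ds < ∫₀¹ e^{Ns/2} ds`, which holds because `s² < s` on `(0, 1)`.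
-/

theorem integral_exp_mul {c : ℝ} (hc : c ≠ 0) (a b : ℝ) :
    ∫ x in a..b, exp (c * x) = (exp (c * b) - exp (c * a)) / c := by
  rw [intervalIntegral.integral_comp_mul_left (fun x => exp x) hc, integral_exp, smul_eq_mul,
    inv_mul_eq_div]

theorem integral_exp_mul_sq_lt_integral_exp_mul {c : ℝ} (hc : 0 < c) :
    ∫ x in (0 : ℝ)..1, exp (c * x ^ 2) < ∫ x in (0 : ℝ)..1, exp (c * x) := by
  refine intervalIntegral.integral_lt_integral_of_continuousOn_of_le_of_exists_lt one_pos
    (by fun_prop) (by fun_prop) (fun x hx => ?_) ⟨1 / 2, by norm_num, ?_⟩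
  · have hsq : x ^ 2 ≤ x := by nlinarith [hx.1, hx.2]
    exact exp_le_exp.2 (mul_le_mul_of_nonneg_left hsq hc.le)
  · exact exp_lt_exp.2 (by nlinarith)

/-- For every `N > 0`, the Couette coefficient
`B(N) = (1/N)(e^{N/2} − 1)/∫₀¹ e^{Ns²/2} ds` satisfies `B(N) > 1/2`:
roughness accelerates the Couette flow. -/
theorem stmt8 (N : ℝ) (hN : 0 < N) :
    (1 / N) * (Real.exp (N / 2) - 1) / (∫ s in (0:ℝ)..1, Real.exp (N * s^2 / 2)) > 1 / 2 := by
  simp_rw [mul_div_right_comm N]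
  have hN2 : 0 < N / 2 := half_pos hN
  have hpos : 0 < ∫ s in (0:ℝ)..1, exp (N / 2 * s ^ 2) :=
    intervalIntegral.intervalIntegral_pos_of_pos
      ((by fun_prop : Continuous _).intervalIntegrable 0 1) (fun _ => exp_pos _) one_pos
  have hlt : ∫ s in (0:ℝ)..1, exp (N / 2 * s ^ 2) < 2 / N * (exp (N / 2) - 1) := by
    calc ∫ s in (0:ℝ)..1, exp (N / 2 * s ^ 2)
        < ∫ s in (0:ℝ)..1, exp (N / 2 * s) := integral_exp_mul_sq_lt_integral_exp_mul hN2
      _ = 2 / N * (exp (N / 2) - 1) := by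
        rw [integral_exp_mul hN2.ne', mul_zero, exp_zero, mul_one]
        field_simp
  rw [gt_iff_lt, lt_div_iff₀ hpos]
  linarith [show 1 / N * (exp (N / 2) - 1) = 1 / 2 * (2 / N * (exp (N / 2) - 1)) by ring]
end
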